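/- arXiv:cond-mat/0604649 — 8 statements merged into one kernel-verified Lean document; each statement's English description precedes it below -/
import Mathlib

section
/- Let Σ be a finite set and let c_1,…,c_n : Σ → ℂ be functions that are linearly independent as elements of the space of complex-valued functions on Σ. Fix an integer a ≥ 1 and let 𝒜 be any family of a-element subsets A of {1,…,n} such that for every A ∈ 𝒜 the supports of the functions c_i, i ∈ A, are pairwise disjoint. Then the family of localized a-magnon states (Φ_A)_{A ∈ 𝒜} is linearly independent in H_a. (Theorem 1: if the set of 1-magnon states is linearly independent, then so is the set of a-magnon states for all a.) -/
/-- The localized `a`-magnon product state `Φ(c_1,…,c_a)` as a function on finite subsets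
of `Σ` (an element of `H_a`): `Φ(S) = ∑_g ∏_j c_j (g j)`, the sum running over all
injections `g` from the index set onto `S` (i.e. bijections onto `S`). -/
noncomputable def magnon {σ : Type*} [Fintype σ] [DecidableEq σ]
    {ι : Type*} [Fintype ι] [DecidableEq ι] (c : ι → σ → ℂ) : Finset σ → ℂ :=
  fun S => ∑ g : ι → σ,
    if Function.Injective g ∧ Finset.image g Finset.univ = S then ∏ j, c j (g j) else 0

/-- For an `a`-element subset `A ⊆ {1,…,n}` of indices, `Φ_A := Φ((c_i)_{i ∈ A})`,
well defined since `Φ` is symmetric in its arguments. -/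
noncomputable def magnonSet {σ : Type*} [Fintype σ] [DecidableEq σ] {n : ℕ}
    (c : Fin n → σ → ℂ) (A : Finset (Fin n)) : Finset σ → ℂ :=
  magnon (fun i : ↥A => c i.1)

/-!
Pair `Φ_A` with the state `Ψ_B := Φ((D_j)_{j ∈ B})` of a family `D` biorthogonal to `c` (it exists
because `c` is linearly independent), under the bilinear form `∑_S Φ(S) Ψ(S)`. Expanding both
states, the pairing becomes the permanent `∑_{π : A ≃ B} ∏_i ⟨c_i, D_{π i}⟩` of the Gram matrix:
the assignments that are not injective drop out because the `c_i`, `i ∈ A`, have disjoint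
supports. That permanent is `1` if `A = B` and `0` otherwise, so the `Φ_A` are biorthogonal to
the `Ψ_B` and hence linearly independent.
-/

open Finset Function

theorem linearIndependent_iff_exists_dotProduct_eq_ite {ι α F : Type*} [Finite ι]
    [DecidableEq ι] [Fintype α] [Field F] {v : ι → α → F} :
    LinearIndependent F v ↔ ∃ w : ι → α → F, ∀ i j, v i ⬝ᵥ w j = if i = j then 1 else 0 := by
  constructor
  · intro hv
    have hspan := span_flip_eq_top_iff_linearIndependent.mpr hv
    choose w hw using fun j => (Submodule.mem_span_range_iff_exists_fun F).mp
      (hspan ▸ Submodule.mem_top (x := Pi.single j (1 : F)))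
    refine ⟨w, fun i j => ?_⟩
    simpa [dotProduct, Pi.single_apply, flip, mul_comm] using congrFun (hw j) i
  · rintro ⟨w, hw⟩
    refine linearIndependent_iff'.mpr fun s g hg i hi => ?_
    simpa [sum_dotProduct, hw, sum_ite_eq', hi] using congrArg (· ⬝ᵥ w i) hg

theorem Function.Injective.exists_equiv_comp_eq {ι κ σ : Type*} {g : ι → σ} {h : κ → σ}
    (hg : Injective g) (hh : Injective h) (hgh : Set.range h = Set.range g) :
    ∃ π : ι ≃ κ, h ∘ π = g :=
  ⟨(Equiv.ofInjective g hg).trans ((Equiv.setCongr hgh.symm).trans (Equiv.ofInjective h hh).symm),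
    funext fun i => by simp [Equiv.apply_ofInjective_symm]⟩

theorem injective_of_prod_ne_zero {ι σ R : Type*} [Fintype ι] [CommMonoidWithZero R]
    {c : ι → σ → R} (hc : Pairwise (Disjoint on fun i => support (c i))) {g : ι → σ}
    (hg : ∏ i, c i (g i) ≠ 0) : Injective g := by
  have hfactor : ∀ k, c k (g k) ≠ 0 := fun k h0 => hg (prod_eq_zero (mem_univ k) h0)
  intro i j hij
  by_contra hne
  exact Set.disjoint_left.mp (hc hne) (hfactor i) (hij ▸ hfactor j)

section
variable {σ ι κ : Type*} [Fintype σ] [DecidableEq σ] [Fintype ι] [DecidableEq ι]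
  [Fintype κ] [DecidableEq κ]

theorem magnon_image_of_injective (d : κ → σ → ℂ) {g : ι → σ} (hg : Injective g) :
    magnon d (univ.image g) = ∑ π : ι ≃ κ, ∏ i, d (π i) (g i) := by
  rw [magnon, ← sum_filter]
  symm
  refine sum_bij (fun π _ => g ∘ π.symm) (fun π _ => ?_) (fun π _ π' _ h => ?_) (fun h hh => ?_)
    (fun π _ => ?_)
  · simp [hg.comp π.symm.injective, ← image_image, image_univ_equiv]
  · exact Equiv.symm_bijective.injective (Equiv.ext fun j => hg (congrFun h j))
  · obtain ⟨hh, himage⟩ := (mem_filter.mp hh).2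
    have hrange : Set.range h = Set.range g := by
      simpa using congrArg (fun s : Finset σ => (s : Set σ)) himage
    obtain ⟨π, rfl⟩ := hg.exists_equiv_comp_eq hh hrange
    exact ⟨π, mem_univ _, funext fun j => by simp⟩
  · exact (Equiv.prod_comp π.symm _).symm.trans (by simp)

theorem magnon_dotProduct_magnon {c : ι → σ → ℂ}
    (hc : Pairwise (Disjoint on fun i => support (c i))) (d : κ → σ → ℂ) :
    magnon c ⬝ᵥ magnon d = ∑ π : ι ≃ κ, ∏ i, c i ⬝ᵥ d (π i) := by
  have hvanish : ∀ g : ι → σ, ¬Injective g → ∀ π : ι ≃ κ, ∏ i, c i (g i) * d (π i) (g i) = 0 :=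
    fun g hg π => by
      rw [prod_mul_distrib, of_not_not (mt (injective_of_prod_ne_zero hc) hg), zero_mul]
  calc magnon c ⬝ᵥ magnon d
      = ∑ g : ι → σ, if Injective g then (∏ i, c i (g i)) * magnon d (univ.image g) else 0 := by
        set Φ := magnon d
        simp only [dotProduct, magnon, sum_mul]
        rw [sum_comm]
        refine sum_congr rfl fun g _ => ?_
        simp only [ite_and, ite_mul, zero_mul]
        split_ifs <;> simp
    _ = ∑ g : ι → σ, if Injective g then ∑ π : ι ≃ κ, ∏ i, c i (g i) * d (π i) (g i) else 0 := by
        refine sum_congr rfl fun g _ => ?_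
        split_ifs with hg
        · simp only [magnon_image_of_injective d hg, mul_sum, prod_mul_distrib]
        · rfl
    _ = ∑ g : ι → σ, ∑ π : ι ≃ κ, ∏ i, c i (g i) * d (π i) (g i) := by
        refine sum_congr rfl fun g _ => ?_
        split_ifs with hg
        · rfl
        · exact (sum_eq_zero fun π _ => hvanish g hg π).symm
    _ = ∑ π : ι ≃ κ, ∏ i, c i ⬝ᵥ d (π i) := by
        rw [sum_comm]
        simp only [dotProduct, Fintype.prod_sum]
end

theorem sum_equiv_prod_ite_coe_eq {α R : Type*} [DecidableEq α] [CommSemiring R]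
    (A B : Finset α) :
    ∑ π : A ≃ B, ∏ i : A, (if (i : α) = π i then (1 : R) else 0) = if A = B then 1 else 0 := by
  simp only [Fintype.prod_boole]
  split_ifs with hAB
  · subst hAB
    have hrefl : ∀ π : A ≃ A, (∀ i : A, (i : α) = π i) ↔ π = Equiv.refl A := fun π =>
      ⟨fun h => Equiv.ext fun i => Subtype.ext (h i).symm, by rintro rfl i; rfl⟩
    simp only [hrefl, sum_ite_eq', mem_univ, if_true]
  · refine sum_eq_zero fun π _ => if_neg fun h => hAB ?_
    refine eq_of_subset_of_card_le (fun x hx => ?_) (card_eq_of_equiv π).ge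
    simpa [← h ⟨x, hx⟩] using (π ⟨x, hx⟩).2

theorem magnon_linearIndependent_of_linearIndependent_general
    {σ : Type*} [Fintype σ] [DecidableEq σ] {n : ℕ}
    (c : Fin n → σ → ℂ) (hc : LinearIndependent ℂ c)
    (𝒜 : Finset (Finset (Fin n)))
    (hdisj : ∀ A ∈ 𝒜, ∀ i ∈ A, ∀ j ∈ A, i ≠ j →
      Disjoint (Function.support (c i)) (Function.support (c j))) :
    LinearIndependent ℂ (fun A : 𝒜 => magnonSet c A.1) := by
  obtain ⟨D, hD⟩ := linearIndependent_iff_exists_dotProduct_eq_ite.mp hc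
  refine linearIndependent_iff_exists_dotProduct_eq_ite.mpr
    ⟨fun B => magnonSet D B.1, fun A B => ?_⟩
  have hdisjA : Pairwise (Disjoint on fun i : A.1 => support (c i)) :=
    fun i j hij => hdisj A A.2 i i.2 j j.2 (Subtype.coe_ne_coe.mpr hij)
  simp only [magnonSet, magnon_dotProduct_magnon hdisjA, hD, Subtype.ext_iff]
  exact sum_equiv_prod_ite_coe_eq A.1 B.1

/-- Theorem 1: if the 1-magnon states `c_1,…,c_n` are linearly independent, then for any
`a ≥ 1` and any family `𝒜` of `a`-element index sets whose members have pairwise disjoint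
supports, the family of localized `a`-magnon states `(Φ_A)_{A ∈ 𝒜}` is linearly
independent in `H_a`. -/
theorem magnon_linearIndependent_of_linearIndependent
    {σ : Type*} [Fintype σ] [DecidableEq σ] {n a : ℕ} (ha : 1 ≤ a)
    (c : Fin n → σ → ℂ) (hc : LinearIndependent ℂ c)
    (𝒜 : Finset (Finset (Fin n)))
    (hcard : ∀ A ∈ 𝒜, A.card = a)
    (hdisj : ∀ A ∈ 𝒜, ∀ i ∈ A, ∀ j ∈ A, i ≠ j →
      Disjoint (Function.support (c i)) (Function.support (c j))) :
    LinearIndependent ℂ (fun A : 𝒜 => magnonSet c A.1) :=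
  magnon_linearIndependent_of_linearIndependent_general c hc 𝒜 hdisj
end

section
/- Let Σ be a finite set, let c_1,…,c_n : Σ → ℂ, and set d := n − dim span{c_1,…,c_n}. Fix an integer a ≥ 1 and let 𝒜 be a family of a-element subsets A of {1,…,n} such that for every A ∈ 𝒜 the supports of the functions c_i, i ∈ A, are pairwise disjoint. Then the dimension of the space of linear relations {λ : 𝒜 → ℂ | ∑_{A∈𝒜} λ_A Φ_A = 0} is at most binom(n+a−1, a) − binom(n+a−d−1, a). (Theorem 2: if the codimension of the 1-magnon states is d, the codimension of the a-magnon states is at most this binomial difference.) -/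
/-!
Write `ψ_m` (`symTensor c m`) for the symmetrised tensor `∑_h ⨂_j c_{h j}` over the
arrangements `h` of an `a`-multiset `m` of indices, a function on `σ^a`. For a set `A ∈ 𝒜`,
`ψ_A` agrees with `Φ_A` on injective tuples and vanishes on the others, because the supports of
the `c_i`, `i ∈ A`, are disjoint. Hence every relation among the `Φ_A` is a relation among all
`ψ_m`, and the space of those has dimension `binom(n+a-1, a) - rank`. The `ψ_m` with `m`
supported on `r` linearly independent `c_i` are themselves independent (pair them with products
of dual vectors), so the rank is at least `binom(r+a-1, a)`.
-/

open Finset Function Module LinearMap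

theorem Sym.exists_map_univ_eq {ι : Type*} {a : ℕ} (m : Sym ι a) :
    ∃ h : Fin a → ι, Multiset.map h univ.val = m := by
  classical
  let E : Fin a ≃ (m : Multiset ι) := (Fintype.equivFinOfCardEq (by simp)).symm
  refine ⟨fun j => (E j : ι), ?_⟩
  calc Multiset.map (fun j => (E j : ι)) univ.val
      = Multiset.map (fun x : (m : Multiset ι) => (x : ι)) (Multiset.map E univ.val) := by
        rw [Multiset.map_map]; rfl
    _ = m := by rw [Multiset.map_univ_val_equiv, Multiset.map_univ_coe]

theorem Finset.map_univ_val_eq_val_iff {κ ι : Type*} [Fintype κ] [DecidableEq ι] {h : κ → ι}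
    {A : Finset ι} : Multiset.map h univ.val = A.val ↔ Injective h ∧ univ.image h = A := by
  constructor
  · intro hA
    have hinj : Injective h := fun x y hxy =>
      Multiset.inj_on_of_nodup_map (hA ▸ A.nodup) x (mem_univ x) y (mem_univ y) hxy
    refine ⟨hinj, val_injective ?_⟩
    rw [image_val, hA, A.nodup.dedup]
  · rintro ⟨hinj, rfl⟩
    rw [image_val, (univ.nodup.map hinj).dedup]

theorem Finset.sum_ite_injective_image_eq_sum_equiv {κ ι τ M : Type*} [Fintype κ] [DecidableEq κ]
    [Fintype ι] [DecidableEq ι] [Fintype τ] [DecidableEq τ] [AddCommMonoid M]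
    (f : (κ → τ) → M) {u : ι → τ} (hu : Injective u) {S : Finset τ} (hS : univ.image u = S) :
    ∑ g : κ → τ, (if Injective g ∧ univ.image g = S then f g else 0) =
      ∑ E : κ ≃ ι, f (u ∘ E) := by
  subst hS
  rw [← sum_filter]
  symm
  refine sum_bij (fun E _ => u ∘ E) (fun E _ => ?_) (fun E _ E' _ h => ?_) (fun g hg => ?_)
    (fun _ _ => rfl)
  · simp [hu.comp E.injective, ← image_image, image_univ_equiv]
  · ext k; exact hu (congrFun h k)
  · obtain ⟨hg, himg⟩ := (mem_filter.1 hg).2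
    have hrange : Set.range g = Set.range u := by
      simpa [Set.image_univ] using congrArg (fun s : Finset τ => (s : Set τ)) himg
    refine ⟨(Equiv.ofInjective g hg).trans ((Equiv.setCongr hrange).trans
      (Equiv.ofInjective u hu).symm), mem_univ _, ?_⟩
    funext k
    simp [Equiv.apply_ofInjective_symm]

theorem prod_apply_eq_zero_of_not_injective {κ ι σ M₀ : Type*} [Fintype κ]
    [CommMonoidWithZero M₀] {v : ι → σ → M₀} (hv : Pairwise (Disjoint on fun i => support (v i)))
    {f : κ → ι} (hf : Injective f) {μ : κ → σ} (hμ : ¬Injective μ) :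
    ∏ k, v (f k) (μ k) = 0 := by
  obtain ⟨x, y, hxy, hne⟩ := not_injective_iff.mp hμ
  by_cases hx : v (f x) (μ x) = 0
  · exact prod_eq_zero (mem_univ x) hx
  · refine prod_eq_zero (mem_univ y) (notMem_support.mp fun hy => ?_)
    exact Set.disjoint_left.mp (hv (hf.ne hne)) hx (hxy ▸ hy)

section SymTensor

variable {K σ ι : Type*} [Fintype ι] [DecidableEq ι] {a : ℕ}

noncomputable def symTensor [CommSemiring K] (v : ι → σ → K) (m : Sym ι a) :
    (Fin a → σ) → K :=
  fun μ => ∑ h : Fin a → ι, if Multiset.map h univ.val = m then ∏ j, v (h j) (μ j) else 0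

theorem symTensor_finset [CommSemiring K] (v : ι → σ → K) {A : Finset ι} (hA : A.card = a)
    (μ : Fin a → σ) :
    symTensor v ⟨A.val, hA⟩ μ = ∑ E : Fin a ≃ A, ∏ j, v (E j) (μ j) := by
  show ∑ h, (if Multiset.map h univ.val = A.val then _ else 0) = _
  simp only [map_univ_val_eq_val_iff]
  exact sum_ite_injective_image_eq_sum_equiv _ Subtype.val_injective (by simp)

theorem symTensor_map [CommSemiring K] {κ : Type*} [Fintype κ] [DecidableEq κ] (v : ι → σ → K)
    {e : κ → ι} (he : Injective e) (m : Sym κ a) :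
    symTensor v (m.map e) = symTensor (v ∘ e) m := by
  funext μ
  refine (Fintype.sum_of_injective (fun h' => e ∘ h') he.comp_left _ _ (fun h hh => ?_)
    (fun h' => ?_)).symm
  · refine if_neg fun hm => hh ?_
    have hmem : ∀ j, h j ∈ Set.range e := fun j => by
      obtain ⟨k, -, hk⟩ := Multiset.mem_map.mp
        (Sym.coe_map m e ▸ hm ▸ Multiset.mem_map_of_mem h (mem_univ j))
      exact ⟨k, hk⟩
    choose h' hh' using hmem
    exact ⟨h', funext hh'⟩
  · rw [Sym.coe_map]
    refine if_congr ((Multiset.map_injective he).eq_iff.symm.trans ?_) rfl rfl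
    rw [Multiset.map_map]

theorem LinearIndependent.exists_sum_mul_eq_ite [Field K] [Fintype σ] {v : ι → σ → K}
    (hv : LinearIndependent K v) :
    ∃ w : ι → σ → K, ∀ k l, ∑ ν, w k ν * v l ν = if k = l then 1 else 0 := by
  have hspan := span_flip_eq_top_iff_linearIndependent.mpr hv
  have hmem (k : ι) : ∃ c : σ → K, ∑ ν, c ν • (fun i => v i ν) = Pi.single k (1 : K) :=
    (Submodule.mem_span_range_iff_exists_fun K).mp (hspan ▸ Submodule.mem_top)
  choose w hw using hmem
  exact ⟨w, fun k l => by simpa [Pi.single_apply, eq_comm] using congrFun (hw k) l⟩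

theorem sum_prod_mul_symTensor [CommSemiring K] [Fintype σ] {v w : ι → σ → K}
    (hw : ∀ k l, ∑ ν, w k ν * v l ν = if k = l then 1 else 0) (m : Sym ι a) (h' : Fin a → ι) :
    ∑ μ, (∏ j, w (h' j) (μ j)) * symTensor v m μ =
      if Multiset.map h' univ.val = m then 1 else 0 := by
  have hpair (h : Fin a → ι) :
      ∑ μ : Fin a → σ, ∏ j, w (h' j) (μ j) * v (h j) (μ j) = if h' = h then 1 else 0 := by
    rw [← Fintype.prod_sum fun j ν => w (h' j) ν * v (h j) ν]
    simp only [hw, prod_boole, mem_univ, true_implies, funext_iff]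
  calc ∑ μ, (∏ j, w (h' j) (μ j)) * symTensor v m μ
      = ∑ h : Fin a → ι, if Multiset.map h univ.val = m then
          ∑ μ : Fin a → σ, ∏ j, w (h' j) (μ j) * v (h j) (μ j) else 0 := by
        simp only [symTensor, mul_sum, mul_ite, mul_zero, prod_mul_distrib]
        rw [sum_comm]
        exact sum_congr rfl fun h _ => by split_ifs <;> simp
    _ = _ := by
        rw [sum_eq_single h' (fun h _ hne => by rw [hpair, if_neg (Ne.symm hne), ite_self])
          (by simp), hpair, if_pos rfl]

theorem linearIndependent_symTensor [Field K] [Fintype σ] {v : ι → σ → K}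
    (hv : LinearIndependent K v) :
    LinearIndependent K (symTensor v : Sym ι a → (Fin a → σ) → K) := by
  obtain ⟨w, hw⟩ := hv.exists_sum_mul_eq_ite
  choose rep hrep using Sym.exists_map_univ_eq (ι := ι) (a := a)
  let P : Matrix (Sym ι a) (Fin a → σ) K := .of fun m μ => ∏ j, w (rep m j) (μ j)
  refine LinearIndependent.of_comp P.mulVecLin ?_
  have hP : P.mulVecLin ∘ symTensor v = fun m => Pi.single m 1 := by
    funext m m'
    rw [comp_apply, Matrix.mulVecLin_apply]
    simp only [Matrix.mulVec, dotProduct, P, Matrix.of_apply]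
    rw [sum_prod_mul_symTensor hw, hrep]
    simp only [Sym.coe_inj, Pi.single_apply]
  rw [hP]
  exact Pi.linearIndependent_single_one _ _

end SymTensor

theorem finrank_ker_linearCombination_comp_le {K M ι η : Type*} [Field K] [AddCommGroup M]
    [Module K M] [Fintype ι] [Fintype η] (g : η → M) {e : ι → η} (he : Injective e) :
    finrank K (ker (Fintype.linearCombination K (g ∘ e))) ≤
      finrank K (ker (Fintype.linearCombination K g)) := by
  let X := Function.ExtendByZero.linearMap K e
  have hX (x : ι → K) :
      Fintype.linearCombination K g (X x) = Fintype.linearCombination K (g ∘ e) x := by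
    simp only [Fintype.linearCombination_apply, X, Function.ExtendByZero.linearMap_apply]
    refine (Fintype.sum_of_injective e he _ _ (fun j hj => ?_) (fun i => ?_)).symm
    · simp [extend_apply' _ _ _ hj]
    · simp [he.extend_apply]
  have hXinj : Injective X := fun x y hxy => funext fun i => by
    simpa [X, he.extend_apply] using congrFun hxy (e i)
  refine LinearMap.finrank_le_finrank_of_injective
    (f := X.restrict fun x hx => by simpa [mem_ker, hX] using hx) fun x y hxy => ?_
  exact Subtype.ext (hXinj (congrArg Subtype.val hxy))

theorem magnon_image_eq_sum_equiv {σ ι κ : Type*} [Fintype σ] [DecidableEq σ] [Fintype ι]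
    [DecidableEq ι] [Fintype κ] [DecidableEq κ] (c : ι → σ → ℂ) {μ : κ → σ}
    (hμ : Injective μ) :
    magnon c (univ.image μ) = ∑ E : κ ≃ ι, ∏ k, c (E k) (μ k) := by
  rw [magnon, sum_ite_injective_image_eq_sum_equiv _ hμ rfl]
  refine Fintype.sum_equiv (Equiv.symmEquiv ι κ) _ _ fun E => ?_
  exact (E.symm.prod_comp fun i => c i (μ (E i))).symm.trans (by simp)

theorem symTensor_finset_eq_magnonSet {σ : Type*} [Fintype σ] [DecidableEq σ] {n a : ℕ}
    (c : Fin n → σ → ℂ) {A : Finset (Fin n)} (hA : A.card = a)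
    (hdisj : (A : Set (Fin n)).Pairwise (Disjoint on fun i => support (c i))) (μ : Fin a → σ) :
    symTensor c ⟨A.val, hA⟩ μ = if Injective μ then magnonSet c A (univ.image μ) else 0 := by
  rw [symTensor_finset]
  split_ifs with hμ
  · rw [magnonSet, magnon_image_eq_sum_equiv _ hμ]
  · refine sum_eq_zero fun E _ => ?_
    exact prod_apply_eq_zero_of_not_injective (v := fun i : A => c i)
      hdisj.subtype E.injective hμ

theorem ker_linearCombination_magnonSet_le {σ : Type*} [Fintype σ] [DecidableEq σ] {n a : ℕ}
    (c : Fin n → σ → ℂ) (𝒜 : Finset (Finset (Fin n))) (hcard : ∀ A ∈ 𝒜, A.card = a)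
    (hdisj : ∀ A ∈ 𝒜, (A : Set (Fin n)).Pairwise (Disjoint on fun i => support (c i))) :
    ker (Fintype.linearCombination ℂ fun A : 𝒜 => magnonSet c A.1) ≤
      ker (Fintype.linearCombination ℂ fun A : 𝒜 => symTensor c ⟨A.1.val, hcard A A.2⟩) := by
  intro l hl
  rw [mem_ker, Fintype.linearCombination_apply] at hl ⊢
  funext μ
  have hterm (A : 𝒜) : symTensor c ⟨A.1.val, hcard A A.2⟩ μ =
      if Injective μ then magnonSet c A (univ.image μ) else 0 :=
    symTensor_finset_eq_magnonSet c _ (hdisj A A.2) μ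
  simp only [Finset.sum_apply, Pi.smul_apply, Pi.zero_apply, hterm]
  split_ifs
  · simpa [Finset.sum_apply] using congrFun hl (univ.image μ)
  · simp

theorem codim_magnon_le_general
    {σ : Type*} [Fintype σ] [DecidableEq σ] {n a : ℕ}
    (c : Fin n → σ → ℂ)
    (d : ℕ) (hd : d = n - Module.finrank ℂ (Submodule.span ℂ (Set.range c)))
    (𝒜 : Finset (Finset (Fin n)))
    (hcard : ∀ A ∈ 𝒜, A.card = a)
    (hdisj : ∀ A ∈ 𝒜, ∀ i ∈ A, ∀ j ∈ A, i ≠ j →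
      Disjoint (Function.support (c i)) (Function.support (c j))) :
    Module.finrank ℂ
      ↥(LinearMap.ker (Fintype.linearCombination ℂ (fun A : 𝒜 => magnonSet c A.1)))
      ≤ (n + a - 1).choose a - (n + a - d - 1).choose a := by
  classical
  set T := Fintype.linearCombination ℂ (symTensor c : Sym (Fin n) a → (Fin a → σ) → ℂ)
  let e : 𝒜 → Sym (Fin n) a := fun A => ⟨A.1.val, hcard A A.2⟩
  have he : Injective e := fun A B hAB => Subtype.ext (val_injective (congrArg Subtype.val hAB))
  have hker : finrank ℂ (ker (Fintype.linearCombination ℂ fun A : 𝒜 => magnonSet c A.1)) ≤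
      finrank ℂ (ker T) :=
    (Submodule.finrank_mono (ker_linearCombination_magnonSet_le c 𝒜 hcard hdisj)).trans
      (finrank_ker_linearCombination_comp_le (symTensor c) he)
  obtain ⟨κ, sel, hsel, hspan, hli⟩ := exists_linearIndependent' ℂ c
  have : Fintype κ := Fintype.ofInjective sel hsel
  have hr : Fintype.card κ = finrank ℂ (Submodule.span ℂ (Set.range c)) := by
    rw [← hspan, finrank_span_eq_card hli]
  have hrn : Fintype.card κ ≤ n := by simpa using Fintype.card_le_of_injective sel hsel
  have hrange : (Fintype.card κ + a - 1).choose a ≤ finrank ℂ (range T) := by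
    rw [← Sym.card_sym_eq_choose, ← finrank_span_eq_card (linearIndependent_symTensor hli),
      Fintype.range_linearCombination]
    refine Submodule.finrank_mono (Submodule.span_mono ?_)
    rintro _ ⟨m, rfl⟩
    exact ⟨m.map sel, symTensor_map c hsel m⟩
  have hnullity := T.finrank_range_add_finrank_ker
  rw [finrank_fintype_fun_eq_card, Sym.card_sym_eq_choose, Fintype.card_fin] at hnullity
  have hd' : n + a - d - 1 = Fintype.card κ + a - 1 := by omega
  rw [hd']
  omega

/-- Theorem 2: if `d = n − dim span{c_1,…,c_n}` is the codimension of the 1-magnon states,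
then the space of linear relations between the `a`-magnon states `(Φ_A)_{A ∈ 𝒜}` has
dimension at most `binom(n+a−1, a) − binom(n+a−d−1, a)`. -/
theorem codim_magnon_le
    {σ : Type*} [Fintype σ] [DecidableEq σ] {n a : ℕ} (ha : 1 ≤ a)
    (c : Fin n → σ → ℂ)
    (d : ℕ) (hd : d = n - Module.finrank ℂ (Submodule.span ℂ (Set.range c)))
    (𝒜 : Finset (Finset (Fin n)))
    (hcard : ∀ A ∈ 𝒜, A.card = a)
    (hdisj : ∀ A ∈ 𝒜, ∀ i ∈ A, ∀ j ∈ A, i ≠ j →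
      Disjoint (Function.support (c i)) (Function.support (c j))) :
    Module.finrank ℂ
      ↥(LinearMap.ker (Fintype.linearCombination ℂ (fun A : 𝒜 => magnonSet c A.1)))
      ≤ (n + a - 1).choose a - (n + a - d - 1).choose a :=
  codim_magnon_le_general c d hd 𝒜 hcard hdisj
end

section
/- Let Σ be a finite set, n ≥ 2, and c_1,…,c_n : Σ → ℂ. Assume that the space of linear relations {λ ∈ ℂ^n : ∑_{i=1}^n λ_i c_i = 0} is exactly the one-dimensional span of the all-ones vector (1,1,…,1); in particular ∑_{i=1}^n c_i = 0 and every linear relation between the c_i is a multiple of this one. Fix an integer a ≥ 2 and let 𝒜 be any family of a-element subsets A of {1,…,n} such that for every A ∈ 𝒜 the supports of the functions c_i, i ∈ A, are pairwise disjoint. Then the family (Φ_A)_{A ∈ 𝒜} is linearly independent in H_a. (Theorem 5: for codimension-one systems, all a-magnon states with a > 1 are linearly independent.) -/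
open Finset Function Matrix

theorem prod_eq_zero_of_not_injective {ι σ M : Type*} [Fintype ι] [CommMonoidWithZero M]
    {c : ι → σ → M} (hc : Pairwise (Disjoint on fun i => support (c i))) {g : ι → σ}
    (hg : ¬Injective g) : ∏ i, c i (g i) = 0 := by
  obtain ⟨i, j, hgij, hij⟩ := not_injective_iff.1 hg
  by_cases hi : c i (g i) = 0
  · exact prod_eq_zero (mem_univ i) hi
  · refine prod_eq_zero (mem_univ j) ?_
    by_contra hj
    exact Set.disjoint_left.1 (hc hij) (show g i ∈ support (c i) from hi) (hgij ▸ hj)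

section Magnon

variable {σ : Type*} [Fintype σ] [DecidableEq σ]

theorem sum_magnon_mul_prod_eq_prod_dotProduct {ι : Type*} [Fintype ι] [DecidableEq ι]
    (c : ι → σ → ℂ) (hc : Pairwise (Disjoint on fun i => support (c i))) (y : σ → ℂ) :
    ∑ S, magnon c S * ∏ μ ∈ S, y μ = ∏ i, c i ⬝ᵥ y := by
  simp only [dotProduct, prod_univ_sum, Fintype.piFinset_univ, magnon, sum_mul]
  rw [sum_comm]
  refine sum_congr rfl fun g _ => ?_
  by_cases hg : Injective g
  · simp only [hg, true_and, ite_mul, zero_mul, sum_ite_eq, mem_univ, if_true]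
    rw [prod_image fun i _ j _ h => hg h, prod_mul_distrib]
  · simp only [hg, false_and, if_false, zero_mul, sum_const_zero, prod_mul_distrib,
      prod_eq_zero_of_not_injective hc hg]

theorem sum_magnonSet_mul_prod_eq_prod_dotProduct {n : ℕ} (c : Fin n → σ → ℂ)
    {A : Finset (Fin n)}
    (hA : ∀ i ∈ A, ∀ j ∈ A, i ≠ j → Disjoint (support (c i)) (support (c j))) (y : σ → ℂ) :
    ∑ S, magnonSet c A S * ∏ μ ∈ S, y μ = ∏ i ∈ A, c i ⬝ᵥ y := by
  rw [← prod_coe_sort]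
  exact sum_magnon_mul_prod_eq_prod_dotProduct _
    (fun i j hij => hA i.1 i.2 j.1 j.2 (Subtype.coe_ne_coe.2 hij)) y

end Magnon

theorem exists_dotProduct_eq_of_forall_mem_ker {K ι σ : Type*} [Field K] [Fintype ι]
    [DecidableEq ι] [Fintype σ] [DecidableEq σ] (c : ι → σ → K) (t : ι → K)
    (ht : ∀ v ∈ LinearMap.ker (Fintype.linearCombination K c), t ⬝ᵥ v = 0) :
    ∃ y : σ → K, ∀ i, c i ⬝ᵥ y = t i := by
  have hmem : dotProductEquiv K ι t ∈
      (LinearMap.ker (Fintype.linearCombination K c)).dualAnnihilator :=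
    (Submodule.mem_dualAnnihilator _).2 ht
  rw [← LinearMap.range_dualMap_eq_dualAnnihilator_ker] at hmem
  obtain ⟨ψ, hψ⟩ := hmem
  refine ⟨(dotProductEquiv K σ).symm ψ, fun i => ?_⟩
  have := LinearMap.congr_fun hψ (Pi.single i 1)
  simp only [LinearMap.dualMap_apply, Fintype.linearCombination_apply_single,
    one_smul, dotProductEquiv_apply_apply, dotProduct_single, mul_one] at this
  rw [← this, ← (dotProductEquiv K σ).apply_symm_apply ψ, dotProductEquiv_apply_apply,
    LinearEquiv.symm_apply_apply, dotProduct_comm]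

theorem exists_sum_eq_zero_prod_ne_zero {K ι : Type*} [CommRing K] [CharZero K]
    [DecidableEq ι] [Fintype ι] {s : Finset ι} (hs : 1 < #s) :
    ∃ t : ι → K, ∑ i, t i = 0 ∧ (∀ i ∉ s, t i = 0) ∧ ∏ i ∈ s, t i ≠ 0 := by
  obtain ⟨j, hj⟩ := card_pos.1 (by omega : 0 < #s)
  set t : ι → K := (fun i => if i ∈ s then 1 else 0) - Pi.single j (#s : K)
  refine ⟨t, ?_, ?_, ?_⟩
  · simp [t, sum_sub_distrib]
  · intro i hi
    simp [t, hi, (ne_of_mem_of_not_mem hj hi).symm]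
  · have hrest : ∏ i ∈ s.erase j, t i = 1 := prod_eq_one fun i hi => by
      simp [t, (mem_erase.1 hi).2, (mem_erase.1 hi).1]
    have htj : t j = 1 - #s := by simp [t, hj]
    rw [← mul_prod_erase s t hj, hrest, mul_one, htj, sub_ne_zero]
    exact_mod_cast hs.ne

theorem magnon_linearIndependent_of_codim_one_general
    {σ : Type*} [Fintype σ] [DecidableEq σ] {n a : ℕ} (ha : 2 ≤ a)
    (c : Fin n → σ → ℂ)
    (hker : LinearMap.ker (Fintype.linearCombination ℂ c)
      = Submodule.span ℂ {(fun _ => 1 : Fin n → ℂ)})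
    (𝒜 : Finset (Finset (Fin n)))
    (hcard : ∀ A ∈ 𝒜, A.card = a)
    (hdisj : ∀ A ∈ 𝒜, ∀ i ∈ A, ∀ j ∈ A, i ≠ j →
      Disjoint (Function.support (c i)) (Function.support (c j))) :
    LinearIndependent ℂ (fun A : 𝒜 => magnonSet c A.1) := by
  rw [Fintype.linearIndependent_iff]
  intro lam hlam A₀
  obtain ⟨t, ht_sum, ht_out, ht_prod⟩ :=
    exists_sum_eq_zero_prod_ne_zero (K := ℂ) (s := A₀.1) (by rw [hcard _ A₀.2]; omega)
  obtain ⟨y, hy⟩ := exists_dotProduct_eq_of_forall_mem_ker c t fun v hv => by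
    obtain ⟨r, rfl⟩ := Submodule.mem_span_singleton.1 (hker ▸ hv)
    simp [dotProduct, ← sum_mul, ht_sum]
  have hrel : ∑ A : 𝒜, lam A * ∏ i ∈ A.1, t i = 0 := by
    have := congrArg (Fintype.linearCombination ℂ fun S : Finset σ => ∏ μ ∈ S, y μ) hlam
    simpa only [map_sum, map_zero, map_smul, Fintype.linearCombination_apply, smul_eq_mul,
      sum_magnonSet_mul_prod_eq_prod_dotProduct c (hdisj _ (Subtype.prop _)), hy] using this
  have hothers : ∀ A : 𝒜, A ≠ A₀ → lam A * ∏ i ∈ A.1, t i = 0 := fun A hA => by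
    obtain ⟨i, hiA, hiA₀⟩ := not_subset.1 fun hsub =>
      hA (Subtype.ext (eq_of_subset_of_card_le hsub (by rw [hcard _ A.2, hcard _ A₀.2])))
    rw [prod_eq_zero hiA (ht_out i hiA₀), mul_zero]
  rw [sum_eq_single A₀ (fun A _ => hothers A) (by simp)] at hrel
  exact (mul_eq_zero.1 hrel).resolve_right ht_prod

/-- Theorem 5: if the space of linear relations between the 1-magnon states `c_1,…,c_n` is
exactly the one-dimensional span of the all-ones vector (so `∑ᵢ cᵢ = 0` and every relation
is a multiple of this one), then for every `a ≥ 2` the localized `a`-magnon states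
`(Φ_A)_{A ∈ 𝒜}` supported on pairwise disjoint units are linearly independent. -/
theorem magnon_linearIndependent_of_codim_one
    {σ : Type*} [Fintype σ] [DecidableEq σ] {n a : ℕ} (hn : 2 ≤ n) (ha : 2 ≤ a)
    (c : Fin n → σ → ℂ)
    (hker : LinearMap.ker (Fintype.linearCombination ℂ c)
      = Submodule.span ℂ {(fun _ => 1 : Fin n → ℂ)})
    (𝒜 : Finset (Finset (Fin n)))
    (hcard : ∀ A ∈ 𝒜, A.card = a)
    (hdisj : ∀ A ∈ 𝒜, ∀ i ∈ A, ∀ j ∈ A, i ≠ j →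
      Disjoint (Function.support (c i)) (Function.support (c j))) :
    LinearIndependent ℂ (fun A : 𝒜 => magnonSet c A.1) :=
  magnon_linearIndependent_of_codim_one_general ha c hker 𝒜 hcard hdisj
end

section
/- Let n ≥ 1 and a ≥ 2 be integers and let C be a complex-valued function on the multisets of elements of {1,…,n} of cardinality a−1. Suppose that for every multiset K of elements of {1,…,n} of cardinality a that contains at least one repeated element, one has ∑_{x} (multiplicity of x in K) · C(K with one copy of x removed) = 0, the sum running over the distinct elements x of K. Then C is identically zero. (Key combinatorial lemma in the proof of Theorem 5.) -/
lemma sumsq_cons {n : ℕ} (w : Fin n) (E : Multiset (Fin n)) :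
    ∑ z : Fin n, ((w ::ₘ E).count z)^2 = (∑ z : Fin n, (E.count z)^2) + (2 * E.count w + 1) := by
  have : ∀ z : Fin n, ((w ::ₘ E).count z)^2 = (E.count z)^2 + (if z = w then 2 * E.count w + 1 else 0) := by
    intro z
    rw [Multiset.count_cons]
    split <;> simp_all <;> ring
  simp_rw [this, Finset.sum_add_distrib, Finset.sum_ite_eq' Finset.univ w]
  simp

lemma sumsq_le {n : ℕ} (E : Multiset (Fin n)) : ∑ z : Fin n, (E.count z)^2 ≤ (Multiset.card E)^2 := by
  have hcard : ∑ z : Fin n, E.count z = Multiset.card E := by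
    rw [← Multiset.toFinset_sum_count_eq]
    exact (Finset.sum_subset (Finset.subset_univ _) (by intro x _ hx; simpa using hx)).symm
  calc ∑ z : Fin n, (E.count z)^2 ≤ ∑ z : Fin n, E.count z * Multiset.card E := by
        apply Finset.sum_le_sum; intro z _
        rw [sq]
        exact Nat.mul_le_mul_left _ (hcard ▸ Finset.single_le_sum (f := fun z => E.count z) (fun _ _ => Nat.zero_le _) (Finset.mem_univ z))
    _ = (Multiset.card E)^2 := by rw [← Finset.sum_mul, hcard, sq]

/-- Key combinatorial lemma in the proof of Theorem 5: let `C` be a complex-valued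
function on multisets over `{1,…,n}` of cardinality `a−1`. If for every multiset `K` of
cardinality `a` containing a repeated element one has
`∑_{x ∈ K distinct} (multiplicity of x in K) · C(K \ {x}) = 0`,
then `C` vanishes on all multisets of cardinality `a−1`. -/
theorem multiset_relation_lemma
    {n a : ℕ} (hn : 1 ≤ n) (ha : 2 ≤ a)
    (C : Multiset (Fin n) → ℂ)
    (hC : ∀ K : Multiset (Fin n), Multiset.card K = a → (∃ x, 2 ≤ K.count x) →
      ∑ x ∈ K.toFinset, (K.count x : ℂ) * C (K.erase x) = 0) :
    ∀ J : Multiset (Fin n), Multiset.card J = a - 1 → C J = 0 := by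
  set S : Multiset (Fin n) → ℕ := fun E => ∑ z : Fin n, (E.count z)^2 with hS
  suffices h : ∀ k, ∀ J : Multiset (Fin n), Multiset.card J = a - 1 →
      (a-1)^2 - S J ≤ k → C J = 0 by
    intro J hJ; exact h _ J hJ le_rfl
  intro k
  induction k using Nat.strong_induction_on with
  | _ k ih =>
    intro J hJ hk
    -- J is nonempty
    have hJne : J ≠ 0 := by
      intro h0
      rw [h0] at hJ
      simp at hJ
      omega
    -- pick x of maximal multiplicity
    obtain ⟨x, hxmem, hxmax⟩ := J.toFinset.exists_max_image (fun y => J.count y)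
      (by simpa [Multiset.toFinset_eq_empty] using hJne)
    have hxJ : x ∈ J := Multiset.mem_toFinset.mp hxmem
    have hcx : 1 ≤ J.count x := Multiset.one_le_count_iff_mem.mpr hxJ
    -- apply hC to K = x ::ₘ J
    have hcardK : Multiset.card (x ::ₘ J) = a := by
      rw [Multiset.card_cons, hJ]; omega
    have hrep : ∃ y, 2 ≤ (x ::ₘ J).count y := ⟨x, by rw [Multiset.count_cons_self]; omega⟩
    have hsum := hC (x ::ₘ J) hcardK hrep
    have htf : (x ::ₘ J).toFinset = J.toFinset := by
      rw [Multiset.toFinset_cons, Finset.insert_eq_self.mpr hxmem]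
    rw [htf, ← Finset.add_sum_erase _ _ hxmem] at hsum
    -- the terms over the erased finset vanish by induction
    have hz : ∀ y ∈ J.toFinset.erase x,
        ((x ::ₘ J).count y : ℂ) * C ((x ::ₘ J).erase y) = 0 := by
      intro y hy
      obtain ⟨hyx, hymem⟩ := Finset.mem_erase.mp hy
      have hyJ : y ∈ J := Multiset.mem_toFinset.mp hymem
      have hcy : 1 ≤ J.count y := Multiset.one_le_count_iff_mem.mpr hyJ
      have herase : (x ::ₘ J).erase y = x ::ₘ J.erase y :=
        Multiset.erase_cons_tail _ (by exact fun h => hyx h.symm)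
      set J' : Multiset (Fin n) := x ::ₘ J.erase y with hJ'
      have hcard' : Multiset.card J' = a - 1 := by
        rw [hJ', Multiset.card_cons, Multiset.card_erase_of_mem hyJ, hJ,
          Nat.pred_eq_sub_one]
        omega
      -- S J' ≥ S J + 2
      have hEx : (J.erase y).count x = J.count x :=
        Multiset.count_erase_of_ne (fun h => hyx h.symm) _
      have hEy : (J.erase y).count y = J.count y - 1 :=
        Multiset.count_erase_self _ _
      have hSJ : S J = S (J.erase y) + (2 * (J.erase y).count y + 1) := by
        conv_lhs => rw [hS]; rw [show J = y ::ₘ J.erase y from (Multiset.cons_erase hyJ).symm]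
        exact sumsq_cons y (J.erase y)
      have hSJ' : S J' = S (J.erase y) + (2 * (J.erase y).count x + 1) :=
        sumsq_cons x (J.erase y)
      have hle : J.count y ≤ J.count x := hxmax y hymem
      have hstep : S J + 2 ≤ S J' := by
        rw [hSJ, hSJ', hEx, hEy]; omega
      have hbound : S J' ≤ (a-1)^2 := by
        rw [← hcard']; exact sumsq_le J'
      have : C J' = 0 := ih ((a-1)^2 - S J') (by omega) J' hcard' le_rfl
      rw [herase, this, mul_zero]
    rw [Finset.sum_eq_zero hz, add_zero, Multiset.erase_cons_head,
      Multiset.count_cons_self] at hsum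
    have hne : ((J.count x + 1 : ℕ) : ℂ) ≠ 0 :=
      Nat.cast_ne_zero.mpr (Nat.succ_ne_zero _)
    exact (mul_eq_zero.mp hsum).resolve_left hne
end

section
/- Let G be an n×n real symmetric matrix that is positive semidefinite, has G_{ij} ≤ 0 for all i ≠ j, and is irreducible in the sense that the graph on {1,…,n} whose edges are the pairs {i,j} with i ≠ j and G_{ij} ≠ 0 is connected. Then the null space of G has dimension at most one. (Frobenius–Perron argument used to show that the kagomé lattice Gram matrix has codimension exactly one.) -/
open Matrix


/-- Frobenius–Perron argument: a real symmetric positive semidefinite matrix `G` with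
nonpositive off-diagonal entries which is irreducible (the graph whose edges are the pairs
`{i,j}`, `i ≠ j`, with `G i j ≠ 0` is connected) has null space of dimension at most one. -/
theorem nullspace_dim_le_one_of_irreducible
    {n : ℕ} (G : Matrix (Fin n) (Fin n) ℝ)
    (hsymm : G.IsSymm) (hpsd : G.PosSemidef)
    (hoff : ∀ i j : Fin n, i ≠ j → G i j ≤ 0)
    (hconn : ∀ i j : Fin n,
      Relation.ReflTransGen (fun p q : Fin n => p ≠ q ∧ G p q ≠ 0) i j) :
    Module.finrank ℝ ↥(LinearMap.ker G.mulVecLin) ≤ 1 := by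
  rcases Nat.eq_zero_or_pos n with hn | hn
  · subst hn
    have : Subsingleton (Fin 0 → ℝ) := ⟨fun a b => funext fun i => i.elim0⟩
    have : LinearMap.ker G.mulVecLin = ⊥ := Submodule.eq_bot_of_subsingleton
    rw [this]
    simp
  -- key: any kernel vector vanishing somewhere is zero
  have key : ∀ x ∈ LinearMap.ker G.mulVecLin, ∀ i₀ : Fin n, x i₀ = 0 → x = 0 := by
    intro x hx i₀ hxi₀
    have hGx : G *ᵥ x = 0 := hx
    set y : Fin n → ℝ := fun i => |x i| with hy
    -- quadratic form on y is ≤ quadratic form on x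
    have hquad : y ⬝ᵥ (G *ᵥ y) ≤ x ⬝ᵥ (G *ᵥ x) := by
      simp only [dotProduct, Matrix.mulVec, Finset.mul_sum]
      refine Finset.sum_le_sum fun i _ => Finset.sum_le_sum fun j _ => ?_
      rcases eq_or_ne i j with rfl | hij
      · have : y i * (G i i * y i) = x i * (G i i * x i) := by
          rw [hy]; dsimp only
          rcases abs_choice (x i) with h | h <;> rw [h] <;> ring
        exact this.le
      · have h1 : G i j ≤ 0 := hoff i j hij
        have h2 : x i * x j ≤ y i * y j := by
          calc x i * x j ≤ |x i * x j| := le_abs_self _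
          _ = y i * y j := by rw [abs_mul]
        calc y i * (G i j * y j) = G i j * (y i * y j) := by ring
          _ ≤ G i j * (x i * x j) := mul_le_mul_of_nonpos_left h2 h1
          _ = x i * (G i j * x j) := by ring
    have hx0 : x ⬝ᵥ (G *ᵥ x) = 0 := by rw [hGx, dotProduct_zero]
    have hy0 : y ⬝ᵥ (G *ᵥ y) = 0 :=
      le_antisymm (hx0 ▸ hquad) (hpsd.dotProduct_mulVec_nonneg y)
    have hGy : G *ᵥ y = 0 := by
      have := (hpsd.dotProduct_mulVec_zero_iff y).mp (by simpa using hy0)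
      exact this
    -- propagate zero along the connectivity relation
    have hzero : ∀ i : Fin n, x i = 0 := by
      intro i
      have hc := hconn i₀ i
      induction hc with
      | refl => exact hxi₀
      | tail hbc hedge ih =>
        rename_i b c
        obtain ⟨hbc', hGbc⟩ := hedge
        -- row b of G *ᵥ y = 0
        have hrow : ∑ j, G b j * y j = 0 := congrFun hGy b
        have hyb : y b = 0 := by rw [hy]; dsimp only; rw [ih, abs_zero]
        -- all terms nonpositive
        have hterms : ∀ j ∈ Finset.univ, G b j * y j ≤ 0 := by
          intro j _
          rcases eq_or_ne b j with rfl | hbj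
          · rw [hyb, mul_zero]
          · exact mul_nonpos_of_nonpos_of_nonneg (hoff b j hbj) (abs_nonneg _)
        have hterm0 : ∀ j ∈ Finset.univ, G b j * y j = 0 :=
          (Finset.sum_eq_zero_iff_of_nonpos hterms).mp hrow
        have := hterm0 c (Finset.mem_univ c)
        have hyc : y c = 0 := by
          rcases mul_eq_zero.mp this with h | h
          · exact absurd h hGbc
          · exact h
        exact abs_eq_zero.mp hyc
    exact funext hzero
  -- the evaluation map at 0 is injective on the kernel
  have i0 : Fin n := ⟨0, hn⟩
  let f : ↥(LinearMap.ker G.mulVecLin) →ₗ[ℝ] ℝ :=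
    { toFun := fun x => (x : Fin n → ℝ) i0
      map_add' := fun a b => rfl
      map_smul' := fun c a => rfl }
  have hf : Function.Injective f := by
    rw [injective_iff_map_eq_zero]
    intro a ha
    ext
    rw [key (a : Fin n → ℝ) a.2 i0 ha]
    rfl
  calc Module.finrank ℝ ↥(LinearMap.ker G.mulVecLin)
      ≤ Module.finrank ℝ ℝ := LinearMap.finrank_le_finrank_of_injective hf
    _ = 1 := Module.finrank_self ℝ
end

section
/- Let m, n ≥ 3 be integers and consider the triangular-torus graph on the vertex set (ℤ/mℤ) × (ℤ/nℤ), in which two distinct vertices u, v are adjacent if and only if u − v ∈ {±(1,0), ±(0,1), ±(1,1)}. Then every independent set S of this graph satisfies 3·|S| ≤ m·n. (Lemma 4: for the kagomé and star lattices, the maximal number of pairwise unconnected units does not exceed one third of the number of units.) -/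
/-!
The triangles `s + {(0,0), (1,0), (1,1)}`, `s ∈ S`, are pairwise disjoint: two of them meet only
if `s - t` is a difference of two corners of the triangle, i.e. `0` or one of the six neighbour
vectors. Hence the `3·|S|` points they cover fit into the `m·n` vertices of the torus.
-/

open Finset Pointwise

theorem Finset.card_mul_card_le_card_of_sub_notMem_sub {G : Type*} [AddCommGroup G] [Fintype G]
    [DecidableEq G] {S A : Finset G} (hS : ∀ s ∈ S, ∀ t ∈ S, s ≠ t → s - t ∉ A - A) :
    #S * #A ≤ Fintype.card G := by
  have hinj : (S ×ˢ A : Set (G × G)).InjOn fun p => p.1 + p.2 := by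
    rintro ⟨s, a⟩ ⟨hs, ha⟩ ⟨t, b⟩ ⟨ht, hb⟩ (hsum : s + a = t + b)
    have hdiff : s - t = b - a := by rw [sub_eq_sub_iff_add_eq_add, hsum, add_comm]
    obtain rfl : s = t := by_contra fun hne => hS s hs t ht hne (hdiff ▸ sub_mem_sub hb ha)
    simp_all
  rw [← card_add_iff.mpr hinj]
  exact card_le_univ _

section Triangle

variable (R R' : Type*) [Ring R] [Ring R'] [DecidableEq R] [DecidableEq R']

def triangle : Finset (R × R') := {(0, 0), (1, 0), (1, 1)}

theorem card_triangle [Nontrivial R] [Nontrivial R'] : #(triangle R R') = 3 := by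
  rw [triangle, card_insert_of_notMem, card_pair] <;> simp [Prod.ext_iff]

variable {R R'}

theorem eq_zero_or_mem_of_mem_triangle_sub_triangle {x : R × R'}
    (hx : x ∈ triangle R R' - triangle R R') :
    x = 0 ∨ x ∈ ({(1, 0), (0, 1), (1, 1), (-1, 0), (0, -1), (-1, -1)} : Set (R × R')) := by
  obtain ⟨a, ha, b, hb, rfl⟩ := mem_sub.mp hx
  simp only [triangle, mem_insert, mem_singleton] at ha hb
  rcases ha with rfl | rfl | rfl <;> rcases hb with rfl | rfl | rfl <;> simp

end Triangle

/-- Lemma 4 (kagomé/star lattice): every independent set `S` of the triangular-torus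
graph on `(ℤ/m) × (ℤ/n)`, where distinct `u, v` are adjacent iff
`u − v ∈ {±(1,0), ±(0,1), ±(1,1)}`, satisfies `3·|S| ≤ m·n`. -/
theorem triangular_torus_independent_card
    (m n : ℕ) (hm : 3 ≤ m) (hn : 3 ≤ n)
    (S : Finset (ZMod m × ZMod n))
    (hS : ∀ u ∈ S, ∀ v ∈ S, u ≠ v →
      u - v ∉ ({(1, 0), (0, 1), (1, 1), (-1, 0), (0, -1), (-1, -1)} :
        Set (ZMod m × ZMod n))) :
    3 * S.card ≤ m * n := by
  have : Fact (1 < m) := ⟨by omega⟩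
  have : Fact (1 < n) := ⟨by omega⟩
  have hpacking : ∀ u ∈ S, ∀ v ∈ S, u ≠ v →
      u - v ∉ triangle (ZMod m) (ZMod n) - triangle (ZMod m) (ZMod n) := by
    intro u hu v hv huv hmem
    rcases eq_zero_or_mem_of_mem_triangle_sub_triangle hmem with h0 | hadj
    · exact huv (sub_eq_zero.mp h0)
    · exact hS u hu v hv huv hadj
  calc 3 * #S = #S * #(triangle (ZMod m) (ZMod n)) := by rw [card_triangle, mul_comm]
    _ ≤ Fintype.card (ZMod m × ZMod n) := card_mul_card_le_card_of_sub_notMem_sub hpacking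
    _ = m * n := by simp [ZMod.card]
end

section
/- Let m, n ≥ 3 be integers divisible by 3 and consider the triangular-torus graph on (ℤ/mℤ) × (ℤ/nℤ), in which two distinct vertices u, v are adjacent if and only if u − v ∈ {±(1,0), ±(0,1), ±(1,1)}. Then there exists an independent set of this graph of cardinality exactly m·n/3; hence the maximal size of an independent set is m·n/3. (Existence of the maximally packed magnon configuration on the triangular lattice of units, figure 7, left.) -/
/-- Maximally packed magnon configuration on the triangular lattice of units (figure 7,
left): if `3 ∣ m` and `3 ∣ n` (`m, n ≥ 3`), the triangular-torus graph on
`(ℤ/m) × (ℤ/n)` (distinct `u, v` adjacent iff `u − v ∈ {±(1,0), ±(0,1), ±(1,1)}`) has an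
independent set of cardinality exactly `m·n/3`, and this is the maximal size. -/
theorem triangular_torus_max_independent
    (m n : ℕ) (hm : 3 ≤ m) (hn : 3 ≤ n) (hm3 : 3 ∣ m) (hn3 : 3 ∣ n) :
    ∃ S : Finset (ZMod m × ZMod n),
      (∀ u ∈ S, ∀ v ∈ S, u ≠ v →
        u - v ∉ ({(1, 0), (0, 1), (1, 1), (-1, 0), (0, -1), (-1, -1)} :
          Set (ZMod m × ZMod n))) ∧
      3 * S.card = m * n ∧
      ∀ T : Finset (ZMod m × ZMod n),
        (∀ u ∈ T, ∀ v ∈ T, u ≠ v →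
          u - v ∉ ({(1, 0), (0, 1), (1, 1), (-1, 0), (0, -1), (-1, -1)} :
            Set (ZMod m × ZMod n))) →
        T.card ≤ S.card := by
  haveI : NeZero m := ⟨by omega⟩
  haveI : NeZero n := ⟨by omega⟩
  -- the coloring homomorphism
  let φ : (ZMod m × ZMod n) →+ ZMod 3 :=
    ((ZMod.castHom hm3 (ZMod 3)).toAddMonoidHom.comp (AddMonoidHom.fst _ _)) +
    ((ZMod.castHom hn3 (ZMod 3)).toAddMonoidHom.comp (AddMonoidHom.snd _ _))
  have hφ : ∀ u : ZMod m × ZMod n, φ u = (ZMod.castHom hm3 (ZMod 3)) u.1 +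
      (ZMod.castHom hn3 (ZMod 3)) u.2 := fun u => rfl
  have hφsurj : Function.Surjective φ := by
    intro c
    refine ⟨((c.val : ZMod m), 0), ?_⟩
    simp [hφ, ZMod.natCast_val, ZMod.cast_id]
  -- values of φ on the forbidden difference set
  have hval : ∀ d : ZMod m × ZMod n,
      d ∈ ({(1, 0), (0, 1), (1, 1), (-1, 0), (0, -1), (-1, -1)} : Set (ZMod m × ZMod n)) → φ d ≠ 0 := by
    intro d hd
    simp only [Set.mem_insert_iff, Set.mem_singleton_iff] at hd
    rcases hd with h | h | h | h | h | h <;> subst h <;> rw [hφ] <;>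
      simp only [map_one, map_zero, map_neg] <;> decide
  let S : Finset (ZMod m × ZMod n) := Finset.univ.filter (fun u => φ u = 0)
  refine ⟨S, ?_, ?_, ?_⟩
  · intro u hu v hv huv hmem
    have hu0 : φ u = 0 := (Finset.mem_filter.mp hu).2
    have hv0 : φ v = 0 := (Finset.mem_filter.mp hv).2
    have : φ (u - v) = 0 := by rw [map_sub, hu0, hv0, sub_zero]
    exact hval _ hmem this
  · -- cardinality
    have h1 : Nat.card (ZMod m × ZMod n) = Nat.card (ZMod 3) * Nat.card φ.ker := by
      rw [AddSubgroup.card_eq_card_quotient_mul_card_addSubgroup φ.ker]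
      congr 1
      exact Nat.card_congr (QuotientAddGroup.quotientKerEquivOfSurjective φ hφsurj).toEquiv
    have h2 : Nat.card (ZMod m × ZMod n) = m * n := by
      simp [Nat.card_eq_fintype_card, ZMod.card]
    have h3 : Nat.card (ZMod 3) = 3 := by
      simp [Nat.card_eq_fintype_card, ZMod.card]
    have h4 : Nat.card φ.ker = S.card := by
      rw [Nat.card_eq_fintype_card]
      classical
      rw [Fintype.card_of_bijective (f := fun (x : φ.ker) => (⟨x.1,
        Finset.mem_filter.mpr ⟨Finset.mem_univ _, x.2⟩⟩ : {u // u ∈ S}))]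
      · exact Fintype.card_coe S
      · constructor
        · intro a b hab
          have h := congrArg Subtype.val hab
          exact Subtype.ext h
        · intro b
          exact ⟨⟨b.1, (Finset.mem_filter.mp b.2).2⟩, rfl⟩
    rw [← h2, h1, h3, h4]
  · -- maximality
    classical
    intro T hT
    -- the "anchor" map sending each vertex to the base vertex of its triangle
    let d : ZMod 3 → ZMod m × ZMod n := fun c => if c = 0 then (0, 0) else if c = 1 then (1, 0) else (1, 1)
    have h3 : ∀ c : ZMod 3, c = 0 ∨ c = 1 ∨ c = 2 := by decide
    have e0 : d 0 = ((0, 0) : ZMod m × ZMod n) := if_pos rfl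
    have e1 : d 1 = ((1, 0) : ZMod m × ZMod n) := by
      show (if (1 : ZMod 3) = 0 then ((0, 0) : ZMod m × ZMod n) else
        if (1 : ZMod 3) = 1 then (1, 0) else (1, 1)) = (1, 0)
      rw [if_neg (by decide), if_pos rfl]
    have e2 : d 2 = ((1, 1) : ZMod m × ZMod n) := by
      show (if (2 : ZMod 3) = 0 then ((0, 0) : ZMod m × ZMod n) else
        if (2 : ZMod 3) = 1 then (1, 0) else (1, 1)) = (1, 1)
      rw [if_neg (by decide), if_neg (by decide)]
    have hφd : ∀ c : ZMod 3, φ (d c) = c := by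
      intro c
      rcases h3 c with h | h | h <;> subst h <;>
        [rw [e0]; rw [e1]; rw [e2]] <;> rw [hφ] <;>
        simp only [map_one, map_zero] <;> decide
    have hmemd : ∀ a b : ZMod 3, a ≠ b → d a - d b ∈
        ({(1, 0), (0, 1), (1, 1), (-1, 0), (0, -1), (-1, -1)} : Set (ZMod m × ZMod n)) := by
      intro a b hab
      rcases h3 a with ha | ha | ha <;> rcases h3 b with hb | hb | hb <;>
        subst ha <;> subst hb <;> first
        | exact absurd rfl hab
        | (simp only [e0, e1, e2, Set.mem_insert_iff, Set.mem_singleton_iff,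
            Prod.mk_sub_mk, Prod.mk.injEq]
           simp [Prod.ext_iff, Prod.neg_mk, zero_sub, sub_zero, sub_self])
    let π : ZMod m × ZMod n → ZMod m × ZMod n := fun u => u - d (φ u)
    have hπS : ∀ u : ZMod m × ZMod n, π u ∈ S := by
      intro u
      refine Finset.mem_filter.mpr ⟨Finset.mem_univ _, ?_⟩
      simp [π, map_sub, hφd]
    have hinj : Set.InjOn π T := by
      intro u hu v hv hpi
      by_contra huv
      have hne : φ u ≠ φ v := by
        intro h
        apply huv
        have := hpi
        simp only [π, h] at this
        exact sub_left_injective this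
      have hdiff : u - v = d (φ u) - d (φ v) := by
        have h' : u - d (φ u) = v - d (φ v) := hpi
        have := sub_eq_sub_iff_sub_eq_sub.mp h'
        linear_combination this
      exact hT u hu v hv huv (hdiff ▸ hmemd _ _ hne)
    calc T.card = (T.image π).card := (Finset.card_image_of_injOn hinj).symm
      _ ≤ S.card := Finset.card_le_card (by
          intro x hx
          obtain ⟨u, _, rfl⟩ := Finset.mem_image.mp hx
          exact hπS u)
end

section
/- Let G be an n×n Hermitian positive definite complex matrix. Define a matrix H indexed by the 2-element subsets of {1,…,n} by H_{{i,j},{k,l}} := G_{ik}·G_{jl} + G_{il}·G_{jk} (which is well defined, being symmetric under exchanging i with j and under exchanging k with l). Then H is Hermitian and positive definite. (The Gram matrix G^{(2)} of 2-magnon states, which is the restriction of G ⊗ G to the symmetric subspace, is positive definite whenever G^{(1)} is.) -/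
/-!
Let `V` be the incidence matrix from ordered pairs `(i, j)` to 2-element sets, with
`V (i, j) P = 1` iff `{i, j} = P`. Each set `{a, b}` has exactly the two preimages `(a, b)` and
`(b, a)`, so `Vᴴ (G ⊗ G) V = 2 H`. Since `V` has injective columns and `G ⊗ G` is positive definite,
so is `H`.
-/

open scoped ComplexOrder

open Matrix
open scoped Kronecker

theorem Finset.pair_eq_pair_iff {α : Type*} [DecidableEq α] {x y z w : α} :
    ({x, y} : Finset α) = {z, w} ↔ x = z ∧ y = w ∨ x = w ∧ y = z := by
  rw [← Finset.coe_inj, Finset.coe_pair, Finset.coe_pair, Set.pair_eq_pair_iff]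

section PairIncidence

variable {ι R : Type*} [Fintype ι] [DecidableEq ι]

variable (ι R) in
def pairIncidence [Zero R] [One R] : Matrix (ι × ι) {P : Finset ι // P.card = 2} R :=
  of fun ij P => if ({ij.1, ij.2} : Finset ι) = P.1 then 1 else 0

theorem sum_ite_pair_eq [AddCommMonoid R] {a b : ι} (hab : a ≠ b) (f : ι × ι → R) :
    ∑ ij : ι × ι, (if ({ij.1, ij.2} : Finset ι) = {a, b} then f ij else 0)
      = f (a, b) + f (b, a) := by
  have hfiber : ({ij | ({ij.1, ij.2} : Finset ι) = {a, b}} : Finset (ι × ι))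
      = {(a, b), (b, a)} := by
    ext ⟨i, j⟩
    simp [Finset.pair_eq_pair_iff]
  rw [← Finset.sum_filter, hfiber, Finset.sum_pair (by simp [hab])]

theorem pairIncidence_mulVec_apply [NonAssocSemiring R] (x : {P : Finset ι // P.card = 2} → R)
    {i j : ι} (hij : i ≠ j) :
    (pairIncidence ι R *ᵥ x) (i, j) = x ⟨{i, j}, Finset.card_pair hij⟩ := by
  rw [mulVec, dotProduct, Fintype.sum_eq_single ⟨{i, j}, Finset.card_pair hij⟩]
  · simp [pairIncidence]
  · intro P hP
    simp only [pairIncidence, of_apply, ite_mul, one_mul, zero_mul, ite_eq_right_iff]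
    exact fun h => absurd (Subtype.ext h.symm) hP

theorem pairIncidence_mulVec_injective [NonAssocSemiring R] :
    Function.Injective (pairIncidence ι R).mulVec := by
  intro x y hxy
  ext ⟨P, hP⟩
  obtain ⟨i, j, hij, rfl⟩ := Finset.card_eq_two.mp hP
  simpa [pairIncidence_mulVec_apply _ hij] using congrFun hxy (i, j)

theorem conjTranspose_pairIncidence_mul_kronecker_mul [CommRing R] [StarRing R]
    (G : Matrix ι ι R) (H : Matrix {P : Finset ι // P.card = 2} {P : Finset ι // P.card = 2} R)
    (hH : ∀ (i j k l : ι) (hij : i ≠ j) (hkl : k ≠ l),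
      H ⟨{i, j}, Finset.card_pair hij⟩ ⟨{k, l}, Finset.card_pair hkl⟩
        = G i k * G j l + G i l * G j k) :
    (pairIncidence ι R)ᴴ * (G ⊗ₖ G) * pairIncidence ι R = (2 : R) • H := by
  ext ⟨P, hP⟩ ⟨Q, hQ⟩
  obtain ⟨i, j, hij, rfl⟩ := Finset.card_eq_two.mp hP
  obtain ⟨k, l, hkl, rfl⟩ := Finset.card_eq_two.mp hQ
  simp only [mul_apply, conjTranspose_apply, pairIncidence, of_apply, apply_ite star, star_one,
    star_zero, ite_mul, one_mul, zero_mul, mul_ite, mul_one, mul_zero, kroneckerMap_apply]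
  rw [sum_ite_pair_eq hkl, sum_ite_pair_eq hij, sum_ite_pair_eq hij, Matrix.smul_apply,
    hH i j k l hij hkl, smul_eq_mul]
  ring

end PairIncidence

/-- The Gram matrix `G⁽²⁾` of 2-magnon states is positive definite whenever `G⁽¹⁾` is:
given an `n×n` Hermitian positive definite matrix `G`, the matrix `H` indexed by the
2-element subsets of `{1,…,n}` with entries `H_{{i,j},{k,l}} = G_{ik}G_{jl} + G_{il}G_{jk}`
(well defined by symmetry) is Hermitian and positive definite. -/
theorem symmetric_square_posDef
    {n : ℕ} (G : Matrix (Fin n) (Fin n) ℂ) (hG : G.PosDef)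
    (H : Matrix {P : Finset (Fin n) // P.card = 2} {P : Finset (Fin n) // P.card = 2} ℂ)
    (hH : ∀ (i j k l : Fin n) (hij : i ≠ j) (hkl : k ≠ l),
      H ⟨{i, j}, Finset.card_pair hij⟩ ⟨{k, l}, Finset.card_pair hkl⟩
        = G i k * G j l + G i l * G j k) :
    H.PosDef := by
  have hH_eq : H = (2 : ℂ)⁻¹ •
      ((pairIncidence (Fin n) ℂ)ᴴ * (G ⊗ₖ G) * pairIncidence (Fin n) ℂ) := by
    rw [conjTranspose_pairIncidence_mul_kronecker_mul G H hH, smul_smul,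
      inv_mul_cancel₀ two_ne_zero, one_smul]
  rw [hH_eq]
  exact ((hG.kronecker hG).conjTranspose_mul_mul_same pairIncidence_mulVec_injective).smul
    (by norm_num)
end
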